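/- For any strings U, V and any integer k ≥ 0, if there exists a rotation U' of U with δ_E(U', V) ≤ k, then there exists a rotation V' of V with δ_E(V', U) ≤ k. -/

import Mathlib

/-- Costs for edit operations (as in the former `Mathlib.Data.List.EditDistance.Defs`). -/
structure Levenshtein.Cost (α β δ : Type*) where
  delete : α → δ
  insert : β → δ
  substitute : α → β → δ

/-- Unit costs, substitution of equal letters free (former Mathlib definition). -/
def Levenshtein.defaultCost {α : Type*} [DecidableEq α] : Levenshtein.Cost α α ℕ where
  delete _ := 1
  insert _ := 1
  substitute a b := if a = b then 0 else 1

/-- Levenshtein distance, by the recursion the former Mathlib definition satisfied. -/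
def levenshtein {α β δ : Type*} [AddZeroClass δ] [Min δ] (C : Levenshtein.Cost α β δ) :
    List α → List β → δ
  | [], [] => 0
  | [], y :: ys => C.insert y + levenshtein C [] ys
  | x :: xs, [] => C.delete x + levenshtein C xs []
  | x :: xs, y :: ys =>
      min (C.delete x + levenshtein C xs (y :: ys))
        (min (C.insert y + levenshtein C (x :: xs) ys) (C.substitute x y + levenshtein C xs ys))

/-- Edit (Levenshtein) distance between two strings, with unit costs. -/
def editDist {α : Type*} [DecidableEq α] (A B : List α) : ℕ :=
  levenshtein Levenshtein.defaultCost A B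

/-- `IsRotation U V` means `V` is a cyclic rotation of `U`. -/
def IsRotation {α : Type*} (U V : List α) : Prop :=
  ∃ X Y : List α, U = X ++ Y ∧ V = Y ++ X

theorem levenshtein_nil_nil {α β δ : Type*} [AddZeroClass δ] [Min δ]
    (C : Levenshtein.Cost α β δ) : levenshtein C ([] : List α) ([] : List β) = 0 := by
  rw [levenshtein]

theorem levenshtein_nil_cons {α β δ : Type*} [AddZeroClass δ] [Min δ]
    (C : Levenshtein.Cost α β δ) (y : β) (ys : List β) :
    levenshtein C ([] : List α) (y :: ys) = C.insert y + levenshtein C [] ys := by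
  rw [levenshtein]

theorem levenshtein_cons_nil {α β δ : Type*} [AddZeroClass δ] [Min δ]
    (C : Levenshtein.Cost α β δ) (x : α) (xs : List α) :
    levenshtein C (x :: xs) ([] : List β) = C.delete x + levenshtein C xs [] := by
  rw [levenshtein]

theorem levenshtein_cons_cons {α β δ : Type*} [AddZeroClass δ] [Min δ]
    (C : Levenshtein.Cost α β δ) (x : α) (xs : List α) (y : β) (ys : List β) :
    levenshtein C (x :: xs) (y :: ys) =
      min (C.delete x + levenshtein C xs (y :: ys))
        (min (C.insert y + levenshtein C (x :: xs) ys) (C.substitute x y + levenshtein C xs ys)) := by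
  rw [levenshtein]

namespace EditDistAux

variable {α : Type*} [DecidableEq α]

local notation "lev" => levenshtein (Levenshtein.defaultCost (α := α))

@[simp] theorem dc_delete (x : α) : (Levenshtein.defaultCost).delete x = 1 := rfl
@[simp] theorem dc_insert (x : α) : (Levenshtein.defaultCost).insert x = 1 := rfl
@[simp] theorem dc_sub (x y : α) :
    (Levenshtein.defaultCost).substitute x y = if x = y then 0 else 1 := rfl

theorem lev_nil_right (A : List α) : lev A [] = A.length := by
  induction A with
  | nil => simp [levenshtein_nil_nil]
  | cons x A ih => simp [levenshtein_cons_nil, ih]; omega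

theorem lev_nil_left (B : List α) : lev [] B = B.length := by
  induction B with
  | nil => simp [levenshtein_nil_nil]
  | cons y B ih => simp [levenshtein_nil_cons, ih]; omega

theorem lev_le_delete (x : α) (A B : List α) : lev (x :: A) B ≤ 1 + lev A B := by
  cases B with
  | nil => simp [lev_nil_right]
  | cons y B =>
    rw [levenshtein_cons_cons]
    exact le_trans (min_le_left _ _) (by simp)

theorem lev_le_insert (y : α) (A B : List α) : lev A (y :: B) ≤ 1 + lev A B := by
  cases A with
  | nil => simp [lev_nil_left]
  | cons x A =>
    rw [levenshtein_cons_cons]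
    exact le_trans (min_le_right _ _) (le_trans (min_le_left _ _) (by simp))

theorem lev_le_sub (x y : α) (A B : List α) :
    lev (x :: A) (y :: B) ≤ (if x = y then 0 else 1) + lev A B := by
  rw [levenshtein_cons_cons]
  exact le_trans (min_le_right _ _) (le_trans (min_le_right _ _) (by simp))

theorem lev_symm (A B : List α) : lev A B = lev B A := by
  induction A generalizing B with
  | nil => simp [lev_nil_left, lev_nil_right]
  | cons x A ihA =>
    induction B with
    | nil => simp [lev_nil_left, lev_nil_right]
    | cons y B ihB =>
      rw [levenshtein_cons_cons, levenshtein_cons_cons]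
      have h1 := ihA (y :: B)
      have h2 := ihA B
      have hs : (if x = y then 0 else 1) = (if y = x then 0 else 1) := by simp [eq_comm]
      simp only [dc_delete, dc_insert, dc_sub] at *
      rw [h1, h2, ← ihB, hs]
      omega

theorem lev_append_le (A1 B1 A2 B2 : List α) :
    lev (A1 ++ A2) (B1 ++ B2) ≤ lev A1 B1 + lev A2 B2 := by
  induction A1 generalizing B1 with
  | nil =>
    induction B1 with
    | nil => simp
    | cons y B1 ihB =>
      simp only [List.nil_append, List.cons_append] at *
      calc lev (A2) (y :: (B1 ++ B2)) ≤ 1 + lev A2 (B1 ++ B2) := lev_le_insert _ _ _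
        _ ≤ 1 + (lev [] B1 + lev A2 B2) := by omega
        _ = lev [] (y :: B1) + lev A2 B2 := by rw [levenshtein_nil_cons]; simp; omega
  | cons x A1 ihA =>
    induction B1 with
    | nil =>
      simp only [List.nil_append, List.cons_append]
      calc lev (x :: (A1 ++ A2)) B2 ≤ 1 + lev (A1 ++ A2) B2 := lev_le_delete _ _ _
        _ ≤ 1 + (lev A1 [] + lev A2 B2) := by have := ihA []; simp at this ⊢; omega
        _ = lev (x :: A1) [] + lev A2 B2 := by rw [levenshtein_cons_nil]; simp; omega
    | cons y B1 ihB =>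
      simp only [List.cons_append]
      rw [levenshtein_cons_cons (xs := A1) (ys := B1)]
      simp only [dc_delete, dc_insert, dc_sub]
      rcases le_or_gt (1 + lev A1 (y :: B1))
          (min (1 + lev (x :: A1) B1) ((if x = y then 0 else 1) + lev A1 B1)) with h | h
      · rw [min_eq_left h]
        calc lev (x :: (A1 ++ A2)) (y :: (B1 ++ B2)) ≤ 1 + lev (A1 ++ A2) (y :: (B1 ++ B2)) :=
            lev_le_delete _ _ _
          _ ≤ 1 + (lev A1 (y :: B1) + lev A2 B2) := by
              have := ihA (y :: B1); simp only [List.cons_append] at this; omega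
          _ = _ := by omega
      · rw [min_eq_right h.le]
        rcases le_or_gt (1 + lev (x :: A1) B1) ((if x = y then 0 else 1) + lev A1 B1) with h2 | h2
        · rw [min_eq_left h2]
          calc lev (x :: (A1 ++ A2)) (y :: (B1 ++ B2)) ≤ 1 + lev (x :: (A1 ++ A2)) (B1 ++ B2) :=
              lev_le_insert _ _ _
            _ ≤ 1 + (lev (x :: A1) B1 + lev A2 B2) := by
                simp only [List.cons_append] at ihB ⊢; omega
            _ = _ := by omega
        · rw [min_eq_right h2.le]
          calc lev (x :: (A1 ++ A2)) (y :: (B1 ++ B2))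
              ≤ (if x = y then 0 else 1) + lev (A1 ++ A2) (B1 ++ B2) := lev_le_sub _ _ _ _
            _ ≤ (if x = y then 0 else 1) + (lev A1 B1 + lev A2 B2) := by
                have := ihA B1; omega
            _ = _ := by omega

theorem lev_split (A1 A2 B : List α) :
    ∃ B1 B2 : List α, B = B1 ++ B2 ∧ lev A1 B1 + lev A2 B2 ≤ lev (A1 ++ A2) B := by
  induction A1 generalizing B with
  | nil =>
    exact ⟨[], B, by simp, by simp [lev_nil_left]⟩
  | cons x A1 ihA =>
    induction B with
    | nil =>
      refine ⟨[], [], by simp, ?_⟩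
      rw [lev_nil_right, lev_nil_right, lev_nil_right]
      simp; omega
    | cons b B ihB =>
      rw [List.cons_append, levenshtein_cons_cons]
      simp only [dc_delete, dc_insert, dc_sub]
      rcases le_or_gt (1 + lev (A1 ++ A2) (b :: B))
          (min (1 + lev (x :: (A1 ++ A2)) B) ((if x = b then 0 else 1) + lev (A1 ++ A2) B))
          with h | h
      · rw [min_eq_left h]
        obtain ⟨B1, B2, hB, hle⟩ := ihA (b :: B)
        refine ⟨B1, B2, hB, ?_⟩
        have := lev_le_delete x A1 B1
        omega
      · rw [min_eq_right h.le]
        rcases le_or_gt (1 + lev (x :: A1 ++ A2) B) ((if x = b then 0 else 1) + lev (A1 ++ A2) B)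
            with h2 | h2
        · rw [min_eq_left (by simpa using h2)]
          obtain ⟨B1, B2, hB, hle⟩ := ihB
          refine ⟨b :: B1, B2, by simp [hB], ?_⟩
          have := lev_le_insert b (x :: A1) B1
          simp only [List.cons_append] at h2 hle ⊢
          omega
        · rw [min_eq_right (by simpa using h2.le)]
          obtain ⟨B1, B2, hB, hle⟩ := ihA B
          refine ⟨b :: B1, B2, by simp [hB], ?_⟩
          have := lev_le_sub x b A1 B1
          omega

end EditDistAux

theorem stmt_2 {α : Type*} [DecidableEq α] (U V : List α) (k : ℕ)
    (h : ∃ U' : List α, IsRotation U U' ∧ editDist U' V ≤ k) :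
    ∃ V' : List α, IsRotation V V' ∧ editDist V' U ≤ k := by
  obtain ⟨U', ⟨X, Y, hU, hU'⟩, hk⟩ := h
  subst hU hU'
  obtain ⟨V1, V2, hV, hle⟩ := EditDistAux.lev_split Y X V
  refine ⟨V2 ++ V1, ⟨V1, V2, hV, rfl⟩, ?_⟩
  simp only [editDist] at *
  subst hV
  calc levenshtein Levenshtein.defaultCost (V2 ++ V1) (X ++ Y)
      ≤ levenshtein Levenshtein.defaultCost V2 X + levenshtein Levenshtein.defaultCost V1 Y :=
        EditDistAux.lev_append_le V2 X V1 Y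
    _ ≤ k := by
        rw [EditDistAux.lev_symm V2 X, EditDistAux.lev_symm V1 Y]
        omega
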